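/- (Doubling of the degenerate measure.) Let d < n-1 and dm = |t|^{d+1-n}dX on ℝ^n. There is a constant C = C(n,d) ≥ 1 such that for every X ∈ ℝ^n and r > 0, m(B_{2r}(X)) ≤ C m(B_r(X)). Moreover m(B_r(X)) ≈ r^n δ(X)^{d+1-n} when δ(X) ≥ 2r and m(B_r(X)) ≈ r^{d+1} when δ(X) ≤ 2r, where δ(X) = dist(X, ℝ^d × {0}). -/

import Mathlib

open MeasureTheory Metric Real
open scoped ENNReal NNReal

noncomputable section

abbrev Ed (d : ℕ) : Type := EuclideanSpace ℝ (Fin d)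
abbrev Esp (d k : ℕ) : Type := EuclideanSpace ℝ (Fin (d + k))

def tpart {d k : ℕ} (X : Esp d k) : Ed k := WithLp.toLp 2 (fun j => X (Fin.natAdd d j))
def glue {d k : ℕ} (x : Ed d) (t : Ed k) : Esp d k :=
  WithLp.toLp 2 (fun i => Fin.addCases (fun i => x i) (fun j => t j) i : Fin (d + k) → ℝ)
def wgt (d k : ℕ) (X : Esp d k) : ℝ := ‖tpart X‖ ^ ((d : ℝ) + 1 - ((d + k : ℕ) : ℝ))

/-- The degenerate measure `m(E) = ∫_E |t|^{d+1-n} dX`. -/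
def mm (d k : ℕ) (S : Set (Esp d k)) : ℝ≥0∞ :=
  ∫⁻ X in S, ENNReal.ofReal (wgt d k X)

/-!
Write `X = (x, t) ∈ ℝᵈ × ℝᵏ` and `δ = |t|`. The single quantity `r^{d+k} max(δ, r)^{1-k}` is
comparable to `m(B_r(X))` for all `X` and `r`; it is doubling in `r`, equals `rⁿ δ^{d+1-n}` when
`δ ≥ r`, and is comparable to `r^{d+1}` when `δ ≤ 2r`.

From below: on `B_r(X)` one has `|t| ≤ δ + r ≤ 2 max(δ, r)` and the weight `|t|^{1-k}` is
decreasing in `|t|`. From above: if `δ ≥ 2r` then `|t| ≥ δ/2` on the ball; if `δ ≤ 2r` the ball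
lies in the cylinder `B_r(x) × B_{3r}(0)`, whose measure is `|B_r(x)| ∫_{B_{3r}} |t|^{1-k} dt`, and
in polar coordinates this integral is `k |B_1| · 3r`.
-/

lemma ENNReal.ofReal_le_two_pow_mul_ofReal {a b : ℝ} (n : ℕ) (h : a ≤ 2 ^ n * b) :
    ENNReal.ofReal a ≤ 2 ^ n * ENNReal.ofReal b := by
  refine (ENNReal.ofReal_le_ofReal h).trans_eq ?_
  rw [ENNReal.ofReal_mul (by positivity), ENNReal.ofReal_pow zero_le_two, ENNReal.ofReal_ofNat]

open Set Module in
lemma lintegral_ball_norm_rpow_one_sub_finrank {E : Type*} [NormedAddCommGroup E]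
    [NormedSpace ℝ E] [FiniteDimensional ℝ E] [MeasurableSpace E] [BorelSpace E] [Nontrivial E]
    (μ : Measure E) [μ.IsAddHaarMeasure] {R : ℝ} (hR : 0 ≤ R) :
    ∫⁻ x in ball 0 R, ENNReal.ofReal (‖x‖ ^ (1 - (finrank ℝ E : ℝ))) ∂μ
      = ENNReal.ofReal (finrank ℝ E * μ.real (ball 0 1) * R) := by
  set n := finrank ℝ E
  set f : ℝ → ℝ := (Iio R).indicator fun y => y ^ (1 - (n : ℝ))
  have hradial : ∀ y ∈ Ioi (0 : ℝ), y ^ (n - 1) • f y = (Iio R).indicator 1 y := by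
    intro y (hy : 0 < y)
    by_cases hyR : y < R
    · have : 1 ≤ n := Module.finrank_pos
      simp only [f, indicator_of_mem (show y ∈ Iio R from hyR), smul_eq_mul, Pi.one_apply]
      rw [← Real.rpow_natCast, ← Real.rpow_add hy, Nat.cast_sub this]
      simp
    · simp [f, hyR]
  have hvol : volume.restrict (Ioi 0) (Iio R) = ENNReal.ofReal R := by
    simp [Measure.restrict_apply measurableSet_Iio, Iio_inter_Ioi]
  have hint : Integrable (fun x : E => f ‖x‖) μ := by
    rw [integrable_fun_norm_addHaar, integrableOn_congr_fun hradial measurableSet_Ioi,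
      IntegrableOn, integrable_indicator_iff measurableSet_Iio]
    exact integrableOn_const (by simp [hvol])
  have hf : ∀ x : E, ENNReal.ofReal (f ‖x‖)
      = (ball 0 R).indicator (fun x => ENNReal.ofReal (‖x‖ ^ (1 - (n : ℝ)))) x := by
    intro x
    by_cases hx : ‖x‖ < R <;> simp [f, hx, indicator]
  simp_rw [← lintegral_indicator measurableSet_ball, ← hf]
  rw [← ofReal_integral_eq_lintegral_ofReal hint (.of_forall fun x => ?_),
    integral_fun_norm_addHaar, setIntegral_congr_fun measurableSet_Ioi hradial,
    integral_indicator_one measurableSet_Iio]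
  · simp [n, measureReal_def, hvol, hR, mul_assoc]
  · simp only [f, indicator]
    split_ifs <;> positivity

lemma MeasureTheory.MeasurePreserving.setLIntegral_preimage_prod_comp_snd
    {α β γ : Type*} [MeasurableSpace α] [MeasurableSpace β] [MeasurableSpace γ]
    {μ : Measure α} {ν : Measure β} {ρ : Measure γ} [SFinite ν] [SFinite ρ] {φ : α → β × γ}
    (hφ : MeasurePreserving φ μ (ν.prod ρ)) {A : Set β} {B : Set γ} (hA : MeasurableSet A)
    (hB : MeasurableSet B) {g : γ → ℝ≥0∞} (hg : Measurable g) :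
    ∫⁻ x in φ ⁻¹' (A ×ˢ B), g (φ x).2 ∂μ = ν A * ∫⁻ z in B, g z ∂ρ := by
  rw [hφ.setLIntegral_comp_preimage (f := fun p => g p.2) (hA.prod hB) (hg.comp measurable_snd),
    setLIntegral_prod (fun p => g p.2) (hg.comp measurable_snd).aemeasurable]
  simp [mul_comm]

lemma EuclideanSpace.volume_ball_eq_mul {m : ℕ} (x : EuclideanSpace ℝ (Fin m)) {r : ℝ}
    (hr : 0 < r) :
    volume (ball x r)
      = ENNReal.ofReal (r ^ m) * volume (ball (0 : EuclideanSpace ℝ (Fin m)) 1) := by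
  rw [Measure.addHaar_ball_of_pos _ _ hr, finrank_euclideanSpace_fin]

lemma one_sub_natCast_nonpos {k : ℕ} (hk : 1 ≤ k) : 1 - (k : ℝ) ≤ 0 :=
  sub_nonpos.2 (Nat.one_le_cast.2 hk)

lemma pow_add_mul_rpow_one_sub (d k : ℕ) {r : ℝ} (hr : 0 < r) :
    r ^ (d + k) * r ^ (1 - (k : ℝ)) = r ^ ((d : ℝ) + 1) := by
  rw [← Real.rpow_natCast, ← Real.rpow_add hr]
  push_cast
  ring_nf

def xpart {d k : ℕ} (X : Esp d k) : Ed d := WithLp.toLp 2 (fun i => X (Fin.castAdd k i))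

def splitEquiv (d k : ℕ) : Esp d k ≃ₗᵢ[ℝ] WithLp 2 (Ed d × Ed k) :=
  (LinearIsometryEquiv.piLpCongrLeft 2 ℝ ℝ finSumFinEquiv.symm).trans
    (PiLp.sumPiLpEquivProdLpPiLp 2 (fun _ => ℝ))

def ballProfile (d k : ℕ) (δ r : ℝ) : ℝ := r ^ (d + k) * max δ r ^ (1 - (k : ℝ))

def MmBallComparable (d k : ℕ) (A : ℝ≥0∞) : Prop :=
  ∀ (X : Esp d k) (r : ℝ), 0 < r →
    mm d k (ball X r) ≤ A * ENNReal.ofReal (ballProfile d k ‖tpart X‖ r) ∧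
    ENNReal.ofReal (ballProfile d k ‖tpart X‖ r) ≤ A * mm d k (ball X r)

section

variable {d k : ℕ}

lemma splitEquiv_apply (X : Esp d k) :
    splitEquiv d k X = WithLp.toLp 2 (xpart X, tpart X) := by
  apply WithLp.ofLp_injective 2
  ext i <;> simp [splitEquiv, xpart, tpart]

lemma measurePreserving_xpart_tpart :
    MeasurePreserving (fun X : Esp d k => (xpart X, tpart X)) volume (volume.prod volume) := by
  rw [← Measure.volume_eq_prod]
  have h := (WithLp.volume_preserving_ofLp (Ed d) (Ed k)).comp (splitEquiv d k).measurePreserving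
  have heq : WithLp.ofLp ∘ splitEquiv d k = fun X => (xpart X, tpart X) := by
    funext X
    simp [splitEquiv_apply]
  rwa [heq] at h

lemma dist_xpart_le (X Y : Esp d k) : dist (xpart X) (xpart Y) ≤ dist X Y := by
  have h := WithLp.dist_fst_le (splitEquiv d k X) (splitEquiv d k Y)
  rwa [LinearIsometryEquiv.dist_map, splitEquiv_apply, splitEquiv_apply] at h

lemma abs_norm_tpart_sub_le (X Y : Esp d k) : |‖tpart Y‖ - ‖tpart X‖| ≤ dist Y X := by
  have h := WithLp.dist_snd_le (splitEquiv d k Y) (splitEquiv d k X)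
  rw [LinearIsometryEquiv.dist_map, splitEquiv_apply, splitEquiv_apply, dist_eq_norm] at h
  exact (abs_norm_sub_norm_le _ _).trans h

lemma volume_tpart_eq_zero (hk : 1 ≤ k) : volume {X : Esp d k | tpart X = 0} = 0 := by
  have : NeZero k := ⟨by omega⟩
  have hpre : {X : Esp d k | tpart X = 0}
      = (fun X => (xpart X, tpart X)) ⁻¹' (Set.univ ×ˢ {0}) := by
    ext X
    simp
  rw [hpre, measurePreserving_xpart_tpart.measure_preimage (by measurability), Measure.prod_prod]
  simp

lemma wgt_eq_rpow (X : Esp d k) : wgt d k X = ‖tpart X‖ ^ (1 - (k : ℝ)) := by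
  rw [wgt]; congr 1; push_cast; ring

lemma ballProfile_of_le {δ r : ℝ} (h : r ≤ δ) :
    ballProfile d k δ r = r ^ (d + k) * δ ^ (1 - (k : ℝ)) := by
  rw [ballProfile, max_eq_left h]

lemma ballProfile_le_rpow (hk : 1 ≤ k) (δ : ℝ) {r : ℝ} (hr : 0 < r) :
    ballProfile d k δ r ≤ r ^ ((d : ℝ) + 1) := by
  rw [ballProfile, ← pow_add_mul_rpow_one_sub d k hr]
  exact mul_le_mul_of_nonneg_left
    (Real.rpow_le_rpow_of_nonpos hr (le_max_right δ r) (one_sub_natCast_nonpos hk)) (by positivity)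

lemma rpow_le_ballProfile (hk : 1 ≤ k) {δ r : ℝ} (hr : 0 < r) (hδ : δ ≤ 2 * r) :
    r ^ ((d : ℝ) + 1) ≤ 2 ^ (k - 1) * ballProfile d k δ r := by
  have htwo : (2 : ℝ) ^ (k - 1) * 2 ^ (1 - (k : ℝ)) = 1 := by
    rw [← Real.rpow_natCast, Nat.cast_sub hk, ← Real.rpow_add two_pos]
    simp
  calc r ^ ((d : ℝ) + 1) = 2 ^ (k - 1) * (r ^ (d + k) * (2 * r) ^ (1 - (k : ℝ))) := by
        rw [Real.mul_rpow zero_le_two hr.le, ← pow_add_mul_rpow_one_sub d k hr]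
        linear_combination (r ^ (d + k) * r ^ (1 - (k : ℝ))) * htwo.symm
    _ ≤ 2 ^ (k - 1) * ballProfile d k δ r := by
        refine mul_le_mul_of_nonneg_left (mul_le_mul_of_nonneg_left ?_ (by positivity))
          (by positivity)
        exact Real.rpow_le_rpow_of_nonpos (lt_max_of_lt_right hr) (max_le hδ (by linarith))
          (one_sub_natCast_nonpos hk)

lemma ballProfile_two_mul_le (hk : 1 ≤ k) (δ : ℝ) {r : ℝ} (hr : 0 < r) :
    ballProfile d k δ (2 * r) ≤ 2 ^ (d + k) * ballProfile d k δ r := by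
  rw [ballProfile, ballProfile, mul_pow, mul_assoc]
  refine mul_le_mul_of_nonneg_left (mul_le_mul_of_nonneg_left ?_ (by positivity)) (by positivity)
  exact Real.rpow_le_rpow_of_nonpos (lt_max_of_lt_right hr)
    (max_le_max le_rfl (by linarith)) (one_sub_natCast_nonpos hk)

lemma ballProfile_mul_le_mm (hk : 1 ≤ k) (X : Esp d k) {r : ℝ} (hr : 0 < r) :
    ENNReal.ofReal (2 ^ (1 - (k : ℝ))) * volume (ball (0 : Esp d k) 1)
      * ENNReal.ofReal (ballProfile d k ‖tpart X‖ r) ≤ mm d k (ball X r) := by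
  set M := max ‖tpart X‖ r
  have hw : ∀ᵐ Y ∂volume.restrict (ball X r),
      ENNReal.ofReal ((2 * M) ^ (1 - (k : ℝ))) ≤ ENNReal.ofReal (wgt d k Y) := by
    -- only a.e.: on `{t = 0}` the weight takes the junk value `0 ^ (1 - k) = 0`
    filter_upwards [ae_restrict_of_ae (measure_eq_zero_iff_ae_notMem.1 (volume_tpart_eq_zero hk)),
      ae_restrict_mem measurableSet_ball] with Y hY0 hY
    refine ENNReal.ofReal_le_ofReal ?_
    rw [wgt_eq_rpow]
    refine Real.rpow_le_rpow_of_nonpos (norm_pos_iff.2 hY0) ?_ (one_sub_natCast_nonpos hk)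
    linarith [abs_le.1 (abs_norm_tpart_sub_le X Y), mem_ball.1 hY, le_max_left ‖tpart X‖ r,
      le_max_right ‖tpart X‖ r]
  calc ENNReal.ofReal (2 ^ (1 - (k : ℝ))) * volume (ball (0 : Esp d k) 1)
        * ENNReal.ofReal (ballProfile d k ‖tpart X‖ r)
      = ∫⁻ _ in ball X r, ENNReal.ofReal ((2 * M) ^ (1 - (k : ℝ))) := by
        have hreal : (2 * M) ^ (1 - (k : ℝ)) * r ^ (d + k)
            = 2 ^ (1 - (k : ℝ)) * ballProfile d k ‖tpart X‖ r := by
          rw [ballProfile, Real.mul_rpow zero_le_two (by positivity)]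
          ring
        rw [setLIntegral_const, EuclideanSpace.volume_ball_eq_mul X hr, ← mul_assoc,
          ← ENNReal.ofReal_mul (by positivity), hreal, ENNReal.ofReal_mul (by positivity)]
        ring
    _ ≤ mm d k (ball X r) := lintegral_mono_ae hw

lemma mm_ball_le_of_two_mul_le (hk : 1 ≤ k) (X : Esp d k) {r : ℝ} (hr : 0 < r)
    (hX : 2 * r ≤ ‖tpart X‖) :
    mm d k (ball X r) ≤ ENNReal.ofReal (2 ^ ((k : ℝ) - 1)) * volume (ball (0 : Esp d k) 1)
      * ENNReal.ofReal (ballProfile d k ‖tpart X‖ r) := by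
  set δ := ‖tpart X‖
  have hw : ∀ Y ∈ ball X r,
      ENNReal.ofReal (wgt d k Y) ≤ ENNReal.ofReal ((δ / 2) ^ (1 - (k : ℝ))) := by
    intro Y hY
    refine ENNReal.ofReal_le_ofReal ?_
    rw [wgt_eq_rpow]
    refine Real.rpow_le_rpow_of_nonpos (by linarith) ?_ (one_sub_natCast_nonpos hk)
    linarith [abs_le.1 (abs_norm_tpart_sub_le X Y), mem_ball.1 hY]
  calc mm d k (ball X r) ≤ ∫⁻ _ in ball X r, ENNReal.ofReal ((δ / 2) ^ (1 - (k : ℝ))) :=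
        setLIntegral_mono' measurableSet_ball hw
    _ = _ := by
        have hreal : (δ / 2) ^ (1 - (k : ℝ)) * r ^ (d + k)
            = 2 ^ ((k : ℝ) - 1) * ballProfile d k δ r := by
          rw [ballProfile_of_le (by linarith), Real.div_rpow (by positivity) zero_le_two,
            show (k : ℝ) - 1 = -(1 - k) by ring, Real.rpow_neg zero_le_two]
          ring
        rw [setLIntegral_const, EuclideanSpace.volume_ball_eq_mul X hr, ← mul_assoc,
          ← ENNReal.ofReal_mul (by positivity), hreal, ENNReal.ofReal_mul (by positivity)]
        ring

lemma mm_ball_le_of_le_two_mul (hk : 1 ≤ k) (X : Esp d k) {r : ℝ} (hr : 0 < r)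
    (hX : ‖tpart X‖ ≤ 2 * r) :
    mm d k (ball X r) ≤ volume (ball (0 : Ed d) 1)
      * ENNReal.ofReal (3 * k * volume.real (ball (0 : Ed k) 1))
      * ENNReal.ofReal (r ^ ((d : ℝ) + 1)) := by
  have : NeZero k := ⟨by omega⟩
  have hsub : ball X r
      ⊆ (fun Y => (xpart Y, tpart Y)) ⁻¹' (ball (xpart X) r ×ˢ ball 0 (3 * r)) := by
    intro Y hY
    rw [mem_ball] at hY
    refine ⟨(dist_xpart_le Y X).trans_lt hY, mem_ball_zero_iff.2 ?_⟩
    linarith [abs_le.1 (abs_norm_tpart_sub_le X Y)]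
  have hradial := lintegral_ball_norm_rpow_one_sub_finrank (volume : Measure (Ed k))
    (R := 3 * r) (by positivity)
  rw [finrank_euclideanSpace_fin] at hradial
  calc mm d k (ball X r)
      ≤ mm d k ((fun Y => (xpart Y, tpart Y)) ⁻¹' (ball (xpart X) r ×ˢ ball 0 (3 * r))) :=
        lintegral_mono_set hsub
    _ = volume (ball (xpart X) r)
          * ∫⁻ t in ball (0 : Ed k) (3 * r), ENNReal.ofReal (‖t‖ ^ (1 - (k : ℝ))) := by
        simp_rw [mm, wgt_eq_rpow]
        exact measurePreserving_xpart_tpart.setLIntegral_preimage_prod_comp_snd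
          measurableSet_ball measurableSet_ball
          (g := fun t => ENNReal.ofReal (‖t‖ ^ (1 - (k : ℝ)))) (by fun_prop)
    _ = _ := by
        have hreal : r ^ d * (k * volume.real (ball (0 : Ed k) 1) * (3 * r))
            = 3 * k * volume.real (ball (0 : Ed k) 1) * r ^ ((d : ℝ) + 1) := by
          rw [Real.rpow_add_one hr.ne', Real.rpow_natCast]
          ring
        rw [hradial, EuclideanSpace.volume_ball_eq_mul _ hr, mul_right_comm,
          ← ENNReal.ofReal_mul (by positivity), hreal, ENNReal.ofReal_mul (by positivity)]
        ring

lemma exists_mm_ball_le (hk : 1 ≤ k) : ∃ C : ℝ≥0∞, C ≠ ⊤ ∧ ∀ (X : Esp d k) (r : ℝ), 0 < r →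
    mm d k (ball X r) ≤ C * ENNReal.ofReal (ballProfile d k ‖tpart X‖ r) := by
  set Cfar := ENNReal.ofReal (2 ^ ((k : ℝ) - 1)) * volume (ball (0 : Esp d k) 1)
  set Cnear := volume (ball (0 : Ed d) 1)
    * ENNReal.ofReal (3 * k * volume.real (ball (0 : Ed k) 1)) * 2 ^ (k - 1)
  refine ⟨max Cfar Cnear, ?_, fun X r hr => ?_⟩
  · exact (max_lt (by finiteness) (by finiteness)).ne
  rcases le_total (2 * r) ‖tpart X‖ with hfar | hnear
  · exact (mm_ball_le_of_two_mul_le hk X hr hfar).trans (by gcongr; exact le_max_left _ _)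
  calc mm d k (ball X r)
      ≤ volume (ball (0 : Ed d) 1) * ENNReal.ofReal (3 * k * volume.real (ball (0 : Ed k) 1))
          * ENNReal.ofReal (r ^ ((d : ℝ) + 1)) := mm_ball_le_of_le_two_mul hk X hr hnear
    _ ≤ volume (ball (0 : Ed d) 1) * ENNReal.ofReal (3 * k * volume.real (ball (0 : Ed k) 1))
          * (2 ^ (k - 1) * ENNReal.ofReal (ballProfile d k ‖tpart X‖ r)) := by
        gcongr
        exact ENNReal.ofReal_le_two_pow_mul_ofReal _ (rpow_le_ballProfile hk hr hnear)
    _ = Cnear * ENNReal.ofReal (ballProfile d k ‖tpart X‖ r) := by ring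
    _ ≤ max Cfar Cnear * ENNReal.ofReal (ballProfile d k ‖tpart X‖ r) := by
        gcongr
        exact le_max_right _ _

lemma exists_ballProfile_le_mm (hk : 1 ≤ k) : ∃ C : ℝ≥0∞, C ≠ ⊤ ∧ ∀ (X : Esp d k) (r : ℝ), 0 < r →
    ENNReal.ofReal (ballProfile d k ‖tpart X‖ r) ≤ C * mm d k (ball X r) := by
  set c := ENNReal.ofReal (2 ^ (1 - (k : ℝ))) * volume (ball (0 : Esp d k) 1)
  have hc : c ≠ 0 :=
    mul_ne_zero (ENNReal.ofReal_pos.2 (by positivity)).ne' (measure_ball_pos _ _ one_pos).ne'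
  refine ⟨c⁻¹, ENNReal.inv_ne_top.2 hc, fun X r hr => ?_⟩
  exact (ENNReal.mul_le_iff_le_inv hc (by finiteness)).1 (ballProfile_mul_le_mm hk X hr)

lemma exists_mmBallComparable (hk : 1 ≤ k) :
    ∃ A : ℝ≥0∞, 1 ≤ A ∧ A ≠ ⊤ ∧ MmBallComparable d k A := by
  obtain ⟨C, hC, hle⟩ := exists_mm_ball_le (d := d) hk
  obtain ⟨c, hc, hge⟩ := exists_ballProfile_le_mm (d := d) hk
  refine ⟨max 1 (max C c), le_max_left _ _, (max_lt (by simp) (max_lt hC.lt_top hc.lt_top)).ne,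
    fun X r hr => ⟨(hle X r hr).trans ?_, (hge X r hr).trans ?_⟩⟩ <;> gcongr
  · exact le_max_of_le_right (le_max_left _ _)
  · exact le_max_of_le_right (le_max_right _ _)

namespace MmBallComparable

variable {A : ℝ≥0∞}

lemma mm_ball_two_mul_le (hA : MmBallComparable d k A) (hk : 1 ≤ k) (X : Esp d k) {r : ℝ}
    (hr : 0 < r) : mm d k (ball X (2 * r)) ≤ A * 2 ^ (d + k) * A * mm d k (ball X r) :=
  calc mm d k (ball X (2 * r))
      ≤ A * ENNReal.ofReal (ballProfile d k ‖tpart X‖ (2 * r)) := (hA X (2 * r) (by positivity)).1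
    _ ≤ A * (2 ^ (d + k) * ENNReal.ofReal (ballProfile d k ‖tpart X‖ r)) := by
        gcongr
        exact ENNReal.ofReal_le_two_pow_mul_ofReal _ (ballProfile_two_mul_le hk _ hr)
    _ ≤ A * (2 ^ (d + k) * (A * mm d k (ball X r))) := by
        gcongr
        exact (hA X r hr).2
    _ = A * 2 ^ (d + k) * A * mm d k (ball X r) := by ring

lemma ofReal_rpow_le_mm (hA : MmBallComparable d k A) (hk : 1 ≤ k) (X : Esp d k) {r : ℝ}
    (hr : 0 < r) (hX : ‖tpart X‖ ≤ 2 * r) :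
    ENNReal.ofReal (r ^ ((d : ℝ) + 1)) ≤ 2 ^ (k - 1) * A * mm d k (ball X r) :=
  calc ENNReal.ofReal (r ^ ((d : ℝ) + 1))
      ≤ 2 ^ (k - 1) * ENNReal.ofReal (ballProfile d k ‖tpart X‖ r) :=
        ENNReal.ofReal_le_two_pow_mul_ofReal _ (rpow_le_ballProfile hk hr hX)
    _ ≤ 2 ^ (k - 1) * A * mm d k (ball X r) := by
        rw [mul_assoc]
        gcongr
        exact (hA X r hr).2

end MmBallComparable

end

theorem degenerate_measure_doubling_general (d k : ℕ) (hk : 2 ≤ k) :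
    ∃ C : ℝ≥0∞, 1 ≤ C ∧ C ≠ ⊤ ∧
      ∀ (X : Esp d k) (r : ℝ), 0 < r →
        (mm d k (ball X (2 * r)) ≤ C * mm d k (ball X r)) ∧
        (2 * r ≤ ‖tpart X‖ →
          mm d k (ball X r)
              ≤ C * ENNReal.ofReal
                  (r ^ ((d + k : ℕ) : ℝ) * ‖tpart X‖ ^ ((d : ℝ) + 1 - ((d + k : ℕ) : ℝ))) ∧
          ENNReal.ofReal
              (r ^ ((d + k : ℕ) : ℝ) * ‖tpart X‖ ^ ((d : ℝ) + 1 - ((d + k : ℕ) : ℝ)))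
            ≤ C * mm d k (ball X r)) ∧
        (‖tpart X‖ ≤ 2 * r →
          mm d k (ball X r) ≤ C * ENNReal.ofReal (r ^ ((d : ℝ) + 1)) ∧
          ENNReal.ofReal (r ^ ((d : ℝ) + 1)) ≤ C * mm d k (ball X r)) := by
  obtain ⟨A, hA1, hAtop, hA⟩ := exists_mmBallComparable (d := d) (k := k) (by omega)
  have hexp : (d : ℝ) + 1 - ((d + k : ℕ) : ℝ) = 1 - k := by push_cast; ring
  have hpow : (2 : ℝ≥0∞) ^ (k - 1) ≤ A * 2 ^ (d + k) :=
    (pow_le_pow_right₀ one_le_two (by omega)).trans (le_mul_of_one_le_left' hA1)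
  have hAC : A ≤ A * 2 ^ (d + k) * A :=
    le_mul_of_le_of_one_le (le_mul_of_one_le_right' (one_le_pow₀ one_le_two)) hA1
  refine ⟨A * 2 ^ (d + k) * A, hA1.trans hAC, by finiteness, fun X r hr =>
    ⟨hA.mm_ball_two_mul_le (by omega) X hr, fun hfar => ?_, fun hnear => ⟨?_, ?_⟩⟩⟩
  · rw [hexp, Real.rpow_natCast, ← ballProfile_of_le (by linarith)]
    exact ⟨(hA X r hr).1.trans (by gcongr), (hA X r hr).2.trans (by gcongr)⟩
  · exact (hA X r hr).1.trans (by gcongr; exact ballProfile_le_rpow (by omega) _ hr)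
  · exact (hA.ofReal_rpow_le_mm (by omega) X hr hnear).trans (by gcongr)

/-- the measure `dm = |t|^{d+1-n}dX` is doubling, with
`m(B_r(X)) ≈ rⁿ δ(X)^{d+1-n}` when `δ(X) ≥ 2r` and `m(B_r(X)) ≈ r^{d+1}` when
`δ(X) ≤ 2r`, where `δ(X) = dist(X, ℝᵈ × {0}) = |t(X)|`. -/
theorem degenerate_measure_doubling (d k : ℕ) (hd : 0 < d) (hk : 2 ≤ k) :
    ∃ C : ℝ≥0∞, 1 ≤ C ∧ C ≠ ⊤ ∧
      ∀ (X : Esp d k) (r : ℝ), 0 < r →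
        (mm d k (ball X (2 * r)) ≤ C * mm d k (ball X r)) ∧
        (2 * r ≤ ‖tpart X‖ →
          mm d k (ball X r)
              ≤ C * ENNReal.ofReal
                  (r ^ ((d + k : ℕ) : ℝ) * ‖tpart X‖ ^ ((d : ℝ) + 1 - ((d + k : ℕ) : ℝ))) ∧
          ENNReal.ofReal
              (r ^ ((d + k : ℕ) : ℝ) * ‖tpart X‖ ^ ((d : ℝ) + 1 - ((d + k : ℕ) : ℝ)))
            ≤ C * mm d k (ball X r)) ∧
        (‖tpart X‖ ≤ 2 * r →
          mm d k (ball X r) ≤ C * ENNReal.ofReal (r ^ ((d : ℝ) + 1)) ∧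
          ENNReal.ofReal (r ^ ((d : ℝ) + 1)) ≤ C * mm d k (ball X r)) :=
  degenerate_measure_doubling_general d k hk
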